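/- arXiv:1711.09302 — 3 statements merged into one kernel-verified Lean document; each statement's English description precedes it below -/
import Mathlib

section
/- For 0 < q < 1, ∑_{n=1}^∞ 1/sinh²(nx) = -4 q · d/dq (log ∏_{k=1}^∞ (1 - q^k)), where q = e^{-2x}. -/
/-!
Since `1 / sinh² y = 4 e^{-2y} / (1 - e^{-2y})²`, the left side is `4 ∑ qⁿ / (1 - qⁿ)²`.
Differentiating `log ∏ (1 - qᵏ) = ∑ log (1 - qᵏ)` termwise turns the right side into
`4 ∑ k qᵏ / (1 - qᵏ)`. Both Lambert series equal `4 ∑_{n,d} d q^{nd}`: expand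
`qⁿ / (1 - qⁿ)² = ∑_d d q^{nd}` or `k qᵏ / (1 - qᵏ) = ∑_m k q^{km}`.
-/

open Real

section Lambert

variable {𝕜 : Type*} [NontriviallyNormedField 𝕜]

theorem tsum_pnat_coe_mul_geometric_of_norm_lt_one {r : 𝕜} (hr : ‖r‖ < 1) :
    ∑' n : ℕ+, (n : 𝕜) * r ^ (n : ℕ) = r / (1 - r) ^ 2 := by
  have h := hasSum_coe_mul_geometric_of_norm_lt_one hr
  rw [← h.tsum_eq, ← tsum_zero_pnat_eq_tsum_nat h.summable, Nat.cast_zero, zero_mul, zero_add]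

theorem tsum_pnat_pow_div_one_sub_pow_sq [CompleteSpace 𝕜] [NormSMulClass ℤ 𝕜] {r : 𝕜}
    (hr : ‖r‖ < 1) :
    ∑' n : ℕ+, r ^ (n : ℕ) / (1 - r ^ (n : ℕ)) ^ 2 =
      ∑' n : ℕ+, n * r ^ (n : ℕ) / (1 - r ^ (n : ℕ)) := by
  have h := tsum_pow_div_one_sub_eq_tsum_sigma hr 1
  simp only [pow_one] at h
  rw [h, ← tsum_prod_pow_eq_tsum_sigma 1 hr]
  refine tsum_congr fun d => ?_
  rw [← tsum_pnat_coe_mul_geometric_of_norm_lt_one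
    (by simpa using pow_lt_one₀ (norm_nonneg r) hr d.ne_zero)]
  simp [pow_mul]

end Lambert

theorem one_div_sinh_sq (y : ℝ) :
    1 / sinh y ^ 2 = 4 * exp (-2 * y) / (1 - exp (-2 * y)) ^ 2 := by
  have hu : exp (-y) ≠ 0 := (exp_pos _).ne'
  have hsq : exp (-2 * y) = exp (-y) ^ 2 := by rw [← exp_nat_mul]; ring_nf
  have hsinh : sinh y ^ 2 = (1 - exp (-y) ^ 2) ^ 2 / (4 * exp (-y) ^ 2) := by
    rw [sinh_eq, ← inv_inv (exp y), ← exp_neg]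
    field_simp
    ring
  rw [hsinh, one_div_div, hsq]

section EulerFunction

variable {p : ℝ}

theorem one_sub_pow_succ_pos (hp : |p| < 1) (k : ℕ) : 0 < 1 - p ^ (k + 1) := by
  have : |p ^ (k + 1)| < 1 := by
    rw [abs_pow]
    exact pow_lt_one₀ (abs_nonneg p) hp k.succ_ne_zero
  linarith [le_abs_self (p ^ (k + 1))]

theorem summable_log_one_sub_pow_succ (hp : |p| < 1) :
    Summable fun k : ℕ => log (1 - p ^ (k + 1)) := by
  simpa [sub_eq_add_neg, pow_succ] using
    Real.summable_log_one_add_of_summable ((summable_geometric_of_abs_lt_one hp).mul_right p).neg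

theorem log_tprod_one_sub_pow_succ (hp : |p| < 1) :
    log (∏' k : ℕ, (1 - p ^ (k + 1))) = ∑' k : ℕ, log (1 - p ^ (k + 1)) := by
  rw [← Real.rexp_tsum_eq_tprod (one_sub_pow_succ_pos hp) (summable_log_one_sub_pow_succ hp),
    log_exp]

theorem hasDerivAt_log_one_sub_pow_succ (k : ℕ) (hp : 1 - p ^ (k + 1) ≠ 0) :
    HasDerivAt (fun y => log (1 - y ^ (k + 1))) (-((k + 1) * p ^ k / (1 - p ^ (k + 1)))) p := by
  convert ((hasDerivAt_pow (k + 1) p).const_sub 1).log hp using 1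
  rw [Nat.add_sub_cancel]
  push_cast
  ring

theorem abs_mul_pow_div_one_sub_pow_succ_le {r : ℝ} (hpr : |p| ≤ r) (hr : r < 1) (k : ℕ) :
    |(k + 1) * p ^ k / (1 - p ^ (k + 1))| ≤ (k + 1) * r ^ k / (1 - r) := by
  have hp : |p| < 1 := hpr.trans_lt hr
  have hr0 : 0 ≤ r := (abs_nonneg p).trans hpr
  have hpow : p ^ (k + 1) ≤ |p| :=
    calc p ^ (k + 1) ≤ |p| ^ (k + 1) := abs_pow p (k + 1) ▸ le_abs_self _
      _ ≤ |p| := pow_le_of_le_one (abs_nonneg p) hp.le k.succ_ne_zero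
  rw [abs_div, abs_mul, abs_pow, abs_of_pos (one_sub_pow_succ_pos hp k),
    abs_of_pos (by positivity : (0 : ℝ) < k + 1)]
  gcongr
  linarith

theorem hasDerivAt_log_tprod_one_sub_pow_succ {q : ℝ} (hq : |q| < 1) :
    HasDerivAt (fun p => log (∏' k : ℕ, (1 - p ^ (k + 1))))
      (-∑' k : ℕ, (k + 1) * q ^ k / (1 - q ^ (k + 1))) q := by
  obtain ⟨r, hqr, hr⟩ := exists_between hq
  have hle : ∀ p ∈ Set.Ioo (-r) r, |p| ≤ r := fun p hp => (abs_lt.2 hp).le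
  have hq_mem : q ∈ Set.Ioo (-r) r := abs_lt.1 hqr
  have hr_norm : ‖r‖ < 1 := by rwa [norm_of_nonneg ((abs_nonneg q).trans hqr.le)]
  have hbound : Summable fun k : ℕ => (k + 1) * r ^ k / (1 - r) :=
    (((summable_pow_mul_geometric_of_norm_lt_one 1 hr_norm).add
      (summable_geometric_of_norm_lt_one hr_norm)).div_const (1 - r)).congr fun k => by ring
  have h := hasDerivAt_tsum_of_isPreconnected hbound isOpen_Ioo isPreconnected_Ioo
    (fun k p hp => hasDerivAt_log_one_sub_pow_succ k
      (one_sub_pow_succ_pos ((hle p hp).trans_lt hr) k).ne')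
    (fun k p hp => by
      rw [norm_neg, norm_eq_abs]
      exact abs_mul_pow_div_one_sub_pow_succ_le (hle p hp) hr k)
    hq_mem (summable_log_one_sub_pow_succ hq) hq_mem
  rw [tsum_neg] at h
  refine h.congr_of_eventuallyEq ?_
  filter_upwards [isOpen_Ioo.mem_nhds hq_mem] with p hp
  exact log_tprod_one_sub_pow_succ ((hle p hp).trans_lt hr)

end EulerFunction

theorem sinh_sq_series_eta (x : ℝ) (hx : 0 < x) (q : ℝ) (hq : q = Real.exp (-2 * x)) :
    ∑' n : ℕ, 1 / Real.sinh (((n : ℝ) + 1) * x) ^ 2 =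
      -4 * q * deriv (fun p : ℝ => Real.log (∏' k : ℕ, (1 - p ^ (k + 1)))) q := by
  have hq_abs : |q| < 1 := by
    rw [hq, abs_of_pos (exp_pos _)]
    exact exp_lt_one_iff.2 (by linarith)
  have hterm (n : ℕ) :
      1 / sinh ((n + 1) * x) ^ 2 = 4 * (q ^ (n + 1) / (1 - q ^ (n + 1)) ^ 2) := by
    rw [one_div_sinh_sq, hq, ← exp_nat_mul]
    push_cast
    ring_nf
  have hlambert := tsum_pnat_pow_div_one_sub_pow_sq (𝕜 := ℝ) (r := q) hq_abs
  rw [tsum_pnat_eq_tsum_succ (f := fun n => q ^ n / (1 - q ^ n) ^ 2),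
    tsum_pnat_eq_tsum_succ (f := fun n => n * q ^ n / (1 - q ^ n))] at hlambert
  rw [(hasDerivAt_log_tprod_one_sub_pow_succ hq_abs).deriv, tsum_congr hterm, tsum_mul_left,
    hlambert, mul_neg, ← tsum_mul_left, ← tsum_mul_left, ← tsum_neg]
  refine tsum_congr fun k => ?_
  push_cast
  ring
end

section
/- For 0 < q < 1 and positive integer l, ∑_{n=0}^∞ (-1)^n q^{(2n+1)(l+1/2)}/(1 - q^{2n+1}) = -∑_{j=0}^{l-1} q^{j+1/2}/(1 + q^{2j+1}) + ∑_{n=0}^∞ q^{n+1/2}/(1 + q^{2n+1}). -/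
/-! Expanding `1 / (1 - q ^ (2n+1))` geometrically writes the left side as the absolutely convergent
double series `∑ₙ ∑ₘ (-1)ⁿ q ^ ((2n+1)(l+m+1/2))`. Summing over `n` first gives
`q ^ (k+1/2) / (1 + q ^ (2k+1))` with `k = m + l`, so the left side is the tail from `k = l` of the
series on the right. -/

open Real

section OddPowers

variable {𝕜 : Type*} [NormedField 𝕜]

theorem tsum_neg_one_pow_mul_pow_two_mul_add_one {x : 𝕜} (hx : ‖x‖ < 1) :
    ∑' n : ℕ, (-1) ^ n * x ^ (2 * n + 1) = x / (1 + x ^ 2) := by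
  have hx2 : ‖-x ^ 2‖ < 1 := by
    rw [norm_neg, norm_pow]
    exact pow_lt_one₀ (norm_nonneg x) hx two_ne_zero
  calc ∑' n : ℕ, (-1) ^ n * x ^ (2 * n + 1) = ∑' n : ℕ, x * (-x ^ 2) ^ n := by
        refine tsum_congr fun n => ?_
        rw [neg_pow, pow_succ, pow_mul]
        ring
    _ = x / (1 + x ^ 2) := by
        rw [tsum_mul_left, tsum_geometric_of_norm_lt_one hx2, sub_neg_eq_add, div_eq_mul_inv]

theorem tsum_mul_geometric_pow {t q : 𝕜} (hq : ‖q‖ < 1) {k : ℕ} (hk : k ≠ 0) :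
    ∑' m : ℕ, (t * q ^ m) ^ k = t ^ k / (1 - q ^ k) := by
  have hqk : ‖q ^ k‖ < 1 := by
    rw [norm_pow]
    exact pow_lt_one₀ (norm_nonneg q) hq hk
  simp_rw [mul_pow, ← pow_mul, mul_comm _ k, pow_mul]
  rw [tsum_mul_left, tsum_geometric_of_norm_lt_one hqk, div_eq_mul_inv]

theorem summable_neg_one_pow_mul_mul_geometric_pow_odd [CompleteSpace 𝕜] {t q : 𝕜}
    (ht : ‖t‖ < 1) (hq : ‖q‖ < 1) :
    Summable fun p : ℕ × ℕ => (-1) ^ p.1 * (t * q ^ p.2) ^ (2 * p.1 + 1) := by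
  have hgeom : Summable fun p : ℕ × ℕ => ‖t‖ ^ p.1 * ‖q‖ ^ p.2 :=
    (summable_geometric_of_lt_one (norm_nonneg t) ht).mul_of_nonneg
      (summable_geometric_of_lt_one (norm_nonneg q) hq) (fun _ => by positivity)
      (fun _ => by positivity)
  refine hgeom.of_norm_bounded fun ⟨n, m⟩ => ?_
  calc ‖(-1) ^ n * (t * q ^ m) ^ (2 * n + 1)‖
      = ‖t‖ ^ (2 * n + 1) * ‖q‖ ^ (m * (2 * n + 1)) := by
        simp only [norm_mul, norm_pow, norm_neg, norm_one, one_pow, one_mul, mul_pow, pow_mul]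
    _ ≤ ‖t‖ ^ n * ‖q‖ ^ m :=
        mul_le_mul (pow_le_pow_of_le_one (norm_nonneg t) ht.le (by omega))
          (pow_le_pow_of_le_one (norm_nonneg q) hq.le (Nat.le_mul_of_pos_right m (by omega)))
          (by positivity) (by positivity)

theorem tsum_neg_one_pow_mul_pow_div_one_sub_pow [CompleteSpace 𝕜] {t q : 𝕜} (ht : ‖t‖ < 1)
    (hq : ‖q‖ < 1) :
    ∑' n : ℕ, (-1) ^ n * t ^ (2 * n + 1) / (1 - q ^ (2 * n + 1)) =
      ∑' m : ℕ, t * q ^ m / (1 + (t * q ^ m) ^ 2) := by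
  have htq : ∀ m : ℕ, ‖t * q ^ m‖ < 1 := fun m => by
    rw [norm_mul, norm_pow]
    exact mul_lt_one_of_nonneg_of_lt_one_left (norm_nonneg t) ht
      (pow_le_one₀ (norm_nonneg q) hq.le)
  calc ∑' n : ℕ, (-1) ^ n * t ^ (2 * n + 1) / (1 - q ^ (2 * n + 1))
      = ∑' (n : ℕ) (m : ℕ), (-1) ^ n * (t * q ^ m) ^ (2 * n + 1) := by
        refine tsum_congr fun n => ?_
        rw [tsum_mul_left, tsum_mul_geometric_pow hq (by omega), mul_div_assoc]
    _ = ∑' (m : ℕ) (n : ℕ), (-1) ^ n * (t * q ^ m) ^ (2 * n + 1) :=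
        (Summable.tsum_comm (f := fun n m => (-1) ^ n * (t * q ^ m) ^ (2 * n + 1))
          (summable_neg_one_pow_mul_mul_geometric_pow_odd ht hq)).symm
    _ = ∑' m : ℕ, t * q ^ m / (1 + (t * q ^ m) ^ 2) :=
        tsum_congr fun m => tsum_neg_one_pow_mul_pow_two_mul_add_one (htq m)

end OddPowers

section HalfIntegerPowers

variable {q : ℝ}

theorem rpow_natCast_add_half_sq (hq : 0 ≤ q) (k : ℕ) :
    (q ^ ((k : ℝ) + 1 / 2)) ^ 2 = q ^ (2 * k + 1) := by
  rw [← rpow_natCast, ← rpow_mul hq, ← rpow_natCast]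
  push_cast
  ring_nf

theorem summable_rpow_natCast_add_half_div (hq0 : 0 < q) (hq1 : q < 1) :
    Summable fun k : ℕ => q ^ ((k : ℝ) + 1 / 2) / (1 + q ^ (2 * k + 1)) := by
  refine ((summable_geometric_of_lt_one hq0.le hq1).mul_left (q ^ (1 / 2 : ℝ))).of_nonneg_of_le
    (fun k => by positivity) fun k => ?_
  calc q ^ ((k : ℝ) + 1 / 2) / (1 + q ^ (2 * k + 1)) ≤ q ^ ((k : ℝ) + 1 / 2) :=
        div_le_self (by positivity) (le_add_of_nonneg_right (by positivity))
    _ = q ^ (1 / 2 : ℝ) * q ^ k := by rw [add_comm, rpow_add_natCast hq0.ne']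

end HalfIntegerPowers

theorem alternating_q_series_truncation_general (q : ℝ) (hq0 : 0 < q) (hq1 : q < 1)
    (l : ℕ) :
    ∑' n : ℕ, (-1 : ℝ) ^ n *
        Real.rpow q ((2 * (n : ℝ) + 1) * ((l : ℝ) + 1 / 2)) / (1 - q ^ (2 * n + 1)) =
      -(∑ j ∈ Finset.range l, Real.rpow q ((j : ℝ) + 1 / 2) / (1 + q ^ (2 * j + 1))) +
        ∑' n : ℕ, Real.rpow q ((n : ℝ) + 1 / 2) / (1 + q ^ (2 * n + 1)) := by
  simp only [rpow_eq_pow]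
  set t := q ^ ((l : ℝ) + 1 / 2)
  have ht : ‖t‖ < 1 := by
    rw [norm_of_nonneg (by positivity)]
    exact rpow_lt_one hq0.le hq1 (by positivity)
  have hq : ‖q‖ < 1 := by rwa [norm_of_nonneg hq0.le]
  calc _ = ∑' n : ℕ, (-1) ^ n * t ^ (2 * n + 1) / (1 - q ^ (2 * n + 1)) := by
        refine tsum_congr fun n => ?_
        rw [mul_comm _ ((l : ℝ) + 1 / 2), ← rpow_mul_natCast hq0.le]
        norm_cast
    _ = ∑' m : ℕ, t * q ^ m / (1 + (t * q ^ m) ^ 2) :=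
        tsum_neg_one_pow_mul_pow_div_one_sub_pow ht hq
    _ = ∑' m : ℕ, q ^ (((m + l : ℕ) : ℝ) + 1 / 2) / (1 + q ^ (2 * (m + l) + 1)) := by
        refine tsum_congr fun m => ?_
        have htq : t * q ^ m = q ^ (((m + l : ℕ) : ℝ) + 1 / 2) := by
          rw [← rpow_natCast, ← rpow_add hq0]
          push_cast
          ring_nf
        rw [htq, rpow_natCast_add_half_sq hq0.le]
    _ = _ := by
        rw [← (summable_rpow_natCast_add_half_div hq0 hq1).sum_add_tsum_nat_add l]
        ring

theorem alternating_q_series_truncation (q : ℝ) (hq0 : 0 < q) (hq1 : q < 1)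
    (l : ℕ) (hl : 1 ≤ l) :
    ∑' n : ℕ, (-1 : ℝ) ^ n *
        Real.rpow q ((2 * (n : ℝ) + 1) * ((l : ℝ) + 1 / 2)) / (1 - q ^ (2 * n + 1)) =
      -(∑ j ∈ Finset.range l, Real.rpow q ((j : ℝ) + 1 / 2) / (1 + q ^ (2 * j + 1))) +
        ∑' n : ℕ, Real.rpow q ((n : ℝ) + 1 / 2) / (1 + q ^ (2 * n + 1)) :=
  alternating_q_series_truncation_general q hq0 hq1 l
end

section
/- For x < 0 (so that the parameter m = x satisfies m/(m-1) ∈ (0,1)), the complete elliptic integral of the first kind satisfies K(x/(x-1)) = √(1-x) · K(x), where K is taken as a function of the parameter m (i.e. K(m) = ∫_0^{π/2} dθ/√(1 - m sin²θ)). -/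
/-!
The substitution `θ ↦ π/2 - θ` turns `K(m)` into the same integral with `cos` in place of `sin`,
and for `x < 1` the integrand of `K(x/(x-1))` is, pointwise, `√(1 - x)` times that cosine form:
`1 - x/(x-1) · sin²θ = (1 - x cos²θ)/(1 - x)`.
-/

/-- Complete elliptic integral of the first kind, as a function of the parameter `m = k²`. -/
noncomputable def completeEllipticKm (m : ℝ) : ℝ :=
  ∫ θ in (0 : ℝ)..(Real.pi / 2), 1 / Real.sqrt (1 - m * Real.sin θ ^ 2)

open Real

theorem completeEllipticKm_eq_integral_cos (m : ℝ) :
    completeEllipticKm m = ∫ θ in (0 : ℝ)..(π / 2), 1 / √(1 - m * cos θ ^ 2) := by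
  have reflect := intervalIntegral.integral_comp_sub_left
    (fun θ => 1 / √(1 - m * sin θ ^ 2)) (a := 0) (b := π / 2) (π / 2)
  simp only [sin_pi_div_two_sub, sub_self, sub_zero] at reflect
  rw [completeEllipticKm, reflect]

theorem one_sub_div_sub_one_mul_sin_sq {x : ℝ} (hx : x ≠ 1) (θ : ℝ) :
    1 - x / (x - 1) * sin θ ^ 2 = (1 - x * cos θ ^ 2) / (1 - x) := by
  have hx' : x - 1 ≠ 0 := sub_ne_zero.mpr hx
  rw [sin_sq]
  field_simp
  ring

theorem one_sub_mul_cos_sq_nonneg {x : ℝ} (hx : x ≤ 1) (θ : ℝ) : 0 ≤ 1 - x * cos θ ^ 2 := by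
  nlinarith [cos_sq_le_one θ, sq_nonneg (cos θ)]

theorem inv_sqrt_one_sub_div_sub_one_mul_sin_sq {x : ℝ} (hx : x < 1) (θ : ℝ) :
    1 / √(1 - x / (x - 1) * sin θ ^ 2) = √(1 - x) * (1 / √(1 - x * cos θ ^ 2)) := by
  rw [one_sub_div_sub_one_mul_sin_sq hx.ne, sqrt_div (one_sub_mul_cos_sq_nonneg hx.le θ),
    one_div_div, mul_one_div]

theorem imaginary_modulus_transformation (x : ℝ) (hx : x < 0) :
    completeEllipticKm (x / (x - 1)) = Real.sqrt (1 - x) * completeEllipticKm x := by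
  rw [completeEllipticKm, completeEllipticKm_eq_integral_cos x,
    ← intervalIntegral.integral_const_mul]
  congr 1 with θ
  exact inv_sqrt_one_sub_div_sub_one_mul_sin_sq (hx.trans one_pos) θ
end
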